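/- Abelian property of activated random walk on a finite set: all legal sequences of topplings within a finite set V that stabilize V yield the same odometer (and hence the same final configuration and the same number of ejected particles). -/

import Mathlib

/-- An activated random walk instruction. -/
inductive ArwInstr
  | left
  | right
  | sleep
deriving DecidableEq

/-- A state of activated random walk: the number of active particles at each site,
and whether the site holds a (single) sleeping particle. -/
structure ArwState where
  active : ℤ → ℕ
  asleep : ℤ → Bool

/-- One active particle arrives at site `w`, waking a sleeping particle if present. -/
def arrive (st : ArwState) (w : ℤ) : ArwState where
  active := Function.update st.active w (st.active w + (if st.asleep w then 2 else 1))
  asleep := Function.update st.asleep w false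

/-- Topple site `v`: execute its next unused instruction (`u v` instructions have been
used so far, the stacks being indexed from `1`). A `sleep` instruction puts a lone
active particle to sleep and is otherwise a no-op. -/
def topple (I : ℤ → ℕ → ArwInstr) (u : ℤ → ℕ) (st : ArwState) (v : ℤ) : ArwState :=
  match I v (u v + 1) with
  | .left  => arrive { st with active := Function.update st.active v (st.active v - 1) } (v - 1)
  | .right => arrive { st with active := Function.update st.active v (st.active v - 1) } (v + 1)
  | .sleep =>
      if st.active v = 1 ∧ st.asleep v = false then
        { active := Function.update st.active v 0,
          asleep := Function.update st.asleep v true }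
      else st

/-- Run a sequence of topplings, tracking the odometer `u` and the state. -/
def runArw (I : ℤ → ℕ → ArwInstr) : List ℤ → (ℤ → ℕ) × ArwState → (ℤ → ℕ) × ArwState
  | [], p => p
  | v :: rest, (u, st) =>
      runArw I rest (Function.update u v (u v + 1), topple I u st v)

/-- A toppling sequence is legal if each toppled site holds an active particle
at the time it is toppled. -/
def LegalSeq (I : ℤ → ℕ → ArwInstr) : List ℤ → (ℤ → ℕ) → ArwState → Prop
  | [], _, _ => True
  | v :: rest, u, st =>
      1 ≤ st.active v ∧ LegalSeq I rest (Function.update u v (u v + 1)) (topple I u st v)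

/-- The initial state of the configuration `σ`, with no sleeping particles. -/
def initState (σ : ℤ → ℕ) : ArwState := ⟨σ, fun _ => false⟩

/-- A toppling sequence stabilizes `V` if it only topples sites of `V`, is legal from
the initial configuration `σ` (with no sleeping particles), and afterwards no site of
`V` holds an active particle. -/
def Stabilizes (I : ℤ → ℕ → ArwInstr) (σ : ℤ → ℕ) (V : Set ℤ) (seq : List ℤ) : Prop :=
  (∀ v ∈ seq, v ∈ V) ∧ LegalSeq I seq 0 (initState σ) ∧
    ∀ v ∈ V, (runArw I seq (0, initState σ)).2.active v = 0

/-! Topplings at two distinct sites that both hold an active particle commute, and toppling one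
of them keeps the other active: a site loses active particles only when it is toppled itself.
So if `β` is legal inside `V` and `α` is legal and stabilizes `V` from the same state, the first
site `b` of `β` is active, hence must be toppled in `α` (otherwise it would still be active at the
end), and the first occurrence of `b` in `α` can be moved to the front without changing legality
or the outcome. Induction on `β` makes `β` a submultiset of `α`; by symmetry the two stabilizing
sequences are permutations of each other, i.e. have the same odometer. -/

@[ext]
theorem ArwState.ext {a b : ArwState} (hactive : a.active = b.active)
    (hasleep : a.asleep = b.asleep) : a = b := by
  cases a; cases b; congr

def depart (st : ArwState) (v : ℤ) : ArwState :=
  { st with active := Function.update st.active v (st.active v - 1) }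

def trySleep (st : ArwState) (v : ℤ) : ArwState :=
  if st.active v = 1 ∧ st.asleep v = false then
    { active := Function.update st.active v 0, asleep := Function.update st.asleep v true }
  else st

section Commutation

variable {st : ArwState} {v w : ℤ}

theorem arrive_comm :
    arrive (arrive st v) w = arrive (arrive st w) v := by
  ext x
  · simp only [arrive, Function.update_apply]; split_ifs <;> subst_vars <;> simp_all
  · simp only [arrive, Function.update_apply]; split_ifs <;> rfl

theorem depart_comm :
    depart (depart st v) w = depart (depart st w) v := by
  ext x
  · simp only [depart, Function.update_apply]; split_ifs <;> subst_vars <;> simp_all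
  · rfl

theorem depart_arrive (hv : 1 ≤ st.active v) :
    depart (arrive st w) v = arrive (depart st v) w := by
  ext x
  · simp only [depart, arrive, Function.update_apply]; split_ifs <;> subst_vars <;> simp_all
  · rfl

theorem trySleep_comm (hvw : v ≠ w) :
    trySleep (trySleep st v) w = trySleep (trySleep st w) v := by
  by_cases hv : st.active v = 1 ∧ st.asleep v = false <;>
    by_cases hw : st.active w = 1 ∧ st.asleep w = false <;>
    simp [trySleep, hv, hw, hvw, hvw.symm, Function.update_comm hvw]

theorem trySleep_depart (hvw : v ≠ w) :
    trySleep (depart st w) v = depart (trySleep st v) w := by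
  by_cases hv : st.active v = 1 ∧ st.asleep v = false <;>
    simp [trySleep, depart, hv, hvw, hvw.symm, Function.update_comm hvw]

-- An arrival at `v` wakes a particle that has just fallen asleep there; this needs `v` occupied,
-- since otherwise the arriving particle could itself fall asleep.
theorem trySleep_arrive (hv : 1 ≤ st.active v) :
    trySleep (arrive st w) v = arrive (trySleep st v) w := by
  by_cases hwv : w = v
  · subst hwv
    by_cases hw : st.active w = 1 ∧ st.asleep w = false
    · ext x <;> simp [trySleep, arrive, hw, Function.update_apply]
    · have : ¬(st.active w + (if st.asleep w then 2 else 1) = 1) := by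
        split_ifs <;> omega
      simp [trySleep, arrive, hw, this]
  · by_cases hv' : st.active v = 1 ∧ st.asleep v = false <;>
      simp [trySleep, arrive, hv', hwv, Ne.symm hwv, Function.update_comm hwv]

end Commutation

def ArwInstr.exec : ArwInstr → ArwState → ℤ → ArwState
  | .left, st, v => arrive (depart st v) (v - 1)
  | .right, st, v => arrive (depart st v) (v + 1)
  | .sleep, st, v => trySleep st v

theorem topple_eq_exec (I : ℤ → ℕ → ArwInstr) (u : ℤ → ℕ) (st : ArwState) (v : ℤ) :
    topple I u st v = (I v (u v + 1)).exec st v := by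
  unfold topple
  cases I v (u v + 1) <;> rfl

namespace ArwInstr

variable {st : ArwState} {v w : ℤ}

theorem active_le_exec (a : ArwInstr) (hwv : w ≠ v) : st.active w ≤ (a.exec st v).active w := by
  cases a <;> simp only [exec, arrive, depart, trySleep, Function.update_apply, hwv] <;>
    split_ifs <;> simp_all

theorem exec_comm (a b : ArwInstr) (hvw : v ≠ w) (hv : 1 ≤ st.active v) (hw : 1 ≤ st.active w) :
    b.exec (a.exec st v) w = a.exec (b.exec st w) v := by
  have move_move (x y : ℤ) :
      arrive (depart (arrive (depart st v) x) w) y = arrive (depart (arrive (depart st w) y) v) x := by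
    rw [depart_arrive (by simpa [depart, hvw.symm]), depart_arrive (by simpa [depart, hvw]),
      depart_comm, arrive_comm]
  have move_sleep (x : ℤ) : trySleep (arrive (depart st v) x) w = arrive (depart (trySleep st w) v) x := by
    rw [trySleep_arrive (by simpa [depart, hvw.symm]), trySleep_depart hvw.symm]
  have sleep_move (y : ℤ) : arrive (depart (trySleep st v) w) y = trySleep (arrive (depart st w) y) v := by
    rw [trySleep_arrive (by simpa [depart, hvw]), trySleep_depart hvw]
  cases a <;> cases b <;> simp only [exec, move_move, move_sleep, sleep_move, trySleep_comm hvw]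

end ArwInstr

section Runs

variable (I : ℤ → ℕ → ArwInstr)

def toppleStep (p : (ℤ → ℕ) × ArwState) (v : ℤ) : (ℤ → ℕ) × ArwState :=
  (Function.update p.1 v (p.1 v + 1), topple I p.1 p.2 v)

theorem runArw_cons (v : ℤ) (l : List ℤ) (p : (ℤ → ℕ) × ArwState) :
    runArw I (v :: l) p = runArw I l (toppleStep I p v) :=
  rfl

theorem legalSeq_cons (v : ℤ) (l : List ℤ) (p : (ℤ → ℕ) × ArwState) :
    LegalSeq I (v :: l) p.1 p.2 ↔
      1 ≤ p.2.active v ∧ LegalSeq I l (toppleStep I p v).1 (toppleStep I p v).2 :=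
  Iff.rfl

variable {I}

theorem toppleStep_comm {p : (ℤ → ℕ) × ArwState} {v w : ℤ} (hvw : v ≠ w)
    (hv : 1 ≤ p.2.active v) (hw : 1 ≤ p.2.active w) :
    toppleStep I (toppleStep I p v) w = toppleStep I (toppleStep I p w) v := by
  simp only [toppleStep, topple_eq_exec, Function.update_of_ne hvw, Function.update_of_ne hvw.symm]
  exact Prod.ext (Function.update_comm hvw _ _ _) (ArwInstr.exec_comm _ _ hvw hv hw)

theorem active_le_toppleStep {p : (ℤ → ℕ) × ArwState} {v w : ℤ} (hwv : w ≠ v) :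
    p.2.active w ≤ (toppleStep I p v).2.active w := by
  rw [toppleStep, topple_eq_exec]
  exact ArwInstr.active_le_exec _ hwv

theorem active_le_runArw_active {v : ℤ} :
    ∀ {l : List ℤ} {p : (ℤ → ℕ) × ArwState}, v ∉ l → p.2.active v ≤ (runArw I l p).2.active v
  | [], _, _ => le_rfl
  | w :: l, p, hv => by
    rw [List.mem_cons, not_or] at hv
    rw [runArw_cons]
    exact (active_le_toppleStep hv.1).trans (active_le_runArw_active hv.2)

theorem legalSeq_move_to_front {v : ℤ} {δ : List ℤ} :
    ∀ {γ : List ℤ} {p : (ℤ → ℕ) × ArwState}, v ∉ γ → 1 ≤ p.2.active v →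
      LegalSeq I (γ ++ v :: δ) p.1 p.2 →
      LegalSeq I (v :: (γ ++ δ)) p.1 p.2 ∧ runArw I (v :: (γ ++ δ)) p = runArw I (γ ++ v :: δ) p
  | [], _, _, _, hlegal => ⟨hlegal, rfl⟩
  | w :: γ, p, hvγ, hv, hlegal => by
    rw [List.mem_cons, not_or] at hvγ
    obtain ⟨hw, hlegal⟩ := (legalSeq_cons I _ _ p).1 hlegal
    obtain ⟨hlegal', hrun⟩ :=
      legalSeq_move_to_front hvγ.2 ((active_le_toppleStep hvγ.1).trans' hv) hlegal
    have hswap := toppleStep_comm (I := I) hvγ.1 hv hw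
    refine ⟨(legalSeq_cons I _ _ p).2 ⟨hv, (legalSeq_cons I _ _ _).2
      ⟨(active_le_toppleStep (Ne.symm hvγ.1)).trans' hw, ?_⟩⟩, ?_⟩
    · rw [hswap]
      exact ((legalSeq_cons I _ _ _).1 hlegal').2
    · simp only [List.cons_append, runArw_cons, hswap]
      exact hrun

theorem subperm_of_legalSeq_of_stable {V : Set ℤ} :
    ∀ {β α : List ℤ} {p : (ℤ → ℕ) × ArwState}, (∀ w ∈ β, w ∈ V) →
      LegalSeq I β p.1 p.2 → LegalSeq I α p.1 p.2 →
      (∀ w ∈ V, (runArw I α p).2.active w = 0) → β.Subperm α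
  | [], _, _, _, _, _, _ => List.nil_subperm
  | b :: β, α, p, hβV, hβ, hα, hstable => by
    obtain ⟨hb, hβ⟩ := (legalSeq_cons I _ _ p).1 hβ
    have hbα : b ∈ α := by
      by_contra hbα
      have := (active_le_runArw_active hbα).trans_eq (hstable b (hβV b List.mem_cons_self))
      omega
    obtain ⟨γ, δ, hbγ, rfl, -⟩ := List.exists_erase_eq hbα
    obtain ⟨hα, hrun⟩ := legalSeq_move_to_front hbγ hb hα
    have hsub : β.Subperm (γ ++ δ) :=
      subperm_of_legalSeq_of_stable (fun w hw => hβV w (List.mem_cons_of_mem _ hw)) hβ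
        ((legalSeq_cons I _ _ p).1 hα).2 (by rwa [← runArw_cons, hrun])
    exact ((List.subperm_cons b).2 hsub).trans List.perm_middle.symm.subperm

end Runs

theorem abelian_property_general (I : ℤ → ℕ → ArwInstr) (σ : ℤ → ℕ) (V : Set ℤ)
    (seq₁ seq₂ : List ℤ)
    (h₁ : Stabilizes I σ V seq₁) (h₂ : Stabilizes I σ V seq₂) :
    ∀ v : ℤ, seq₁.count v = seq₂.count v := by
  obtain ⟨hV₁, hlegal₁, hstable₁⟩ := h₁
  obtain ⟨hV₂, hlegal₂, hstable₂⟩ := h₂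
  have hperm : seq₁.Perm seq₂ :=
    (subperm_of_legalSeq_of_stable hV₁ hlegal₁ hlegal₂ hstable₂).antisymm
      (subperm_of_legalSeq_of_stable hV₂ hlegal₂ hlegal₁ hstable₁)
  exact hperm.count_eq

/-- abelian property: all legal toppling sequences within a finite set `V`
that stabilize `V` yield the same odometer. -/
theorem abelian_property (I : ℤ → ℕ → ArwInstr) (σ : ℤ → ℕ) (V : Set ℤ)
    (hV : V.Finite) (seq₁ seq₂ : List ℤ)
    (h₁ : Stabilizes I σ V seq₁) (h₂ : Stabilizes I σ V seq₂) :
    ∀ v : ℤ, seq₁.count v = seq₂.count v :=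
  abelian_property_general I σ V seq₁ seq₂ h₁ h₂
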